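/- Let m, n ∈ ℕ with 1 ≤ m < n and Q = 1/(2n) + 1/(2m). The function (u₂,u₃) ↦ (u₂^{2n} + u₃^{2m})^{z-Q} is locally integrable on ℝ² whenever Re z > 0. -/

import Mathlib

/-!
With `ρ u = |u₁| ^ p + |u₂| ^ q` and `Q = 1/p + 1/q`, the weighted AM-GM inequality with weights
`(1/p)/Q` and `(1/q)/Q` gives `ρ u ≥ (|u₁| |u₂|) ^ (1/Q)`, so for `s < 0` we get
`ρ u ^ s ≤ |u₁| ^ (-c) * |u₂| ^ (-c)` with `c = -s/Q`. When `s > -Q` we have `c < 1`, and the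
right-hand side is a product of locally integrable functions of one variable. For `s ≥ 0`, `ρ ^ s`
is continuous. The theorem is the case `p = 2n`, `q = 2m`, `s = Re z - Q`, since
`‖ρ ^ (z - Q)‖ ≤ ρ ^ (Re z - Q)`.
-/

open MeasureTheory Real

lemma locallyIntegrable_abs_rpow {c : ℝ} (hc : -1 < c) :
    LocallyIntegrable (fun x : ℝ => |x| ^ c) := by
  refine locallyIntegrable_of_norm_le_rpow (C := 1) (α := -c) (by simp)
    (by simpa using neg_lt.1 hc) (ae_of_all _ fun x => ?_)
    (continuous_abs.measurable.pow_const c).aestronglyMeasurable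
  simp [abs_of_nonneg (rpow_nonneg (abs_nonneg x) c)]

theorem MeasureTheory.LocallyIntegrable.mul_prod {X Y L : Type*} [TopologicalSpace X]
    [TopologicalSpace Y] [MeasurableSpace X] [MeasurableSpace Y] [LocallyCompactSpace X]
    [LocallyCompactSpace Y] [NormedRing L] {μ : Measure X} {ν : Measure Y} [SFinite μ] [SFinite ν]
    {f : X → L} {g : Y → L} (hf : LocallyIntegrable f μ) (hg : LocallyIntegrable g ν) :
    LocallyIntegrable (fun z : X × Y => f z.1 * g z.2) (μ.prod ν) := by
  refine locallyIntegrable_iff.2 fun K hK => IntegrableOn.mono_set ?_ Set.subset_prod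
  rw [IntegrableOn, ← Measure.prod_restrict]
  exact (hf.integrableOn_isCompact (hK.image continuous_fst)).mul_prod
    (hg.integrableOn_isCompact (hK.image continuous_snd))

lemma add_rpow_le_rpow_mul_rpow_of_nonpos {a b θ s : ℝ} (ha : 0 < a) (hb : 0 < b)
    (hθ₀ : 0 ≤ θ) (hθ₁ : θ ≤ 1) (hs : s ≤ 0) :
    (a + b) ^ s ≤ a ^ (θ * s) * b ^ ((1 - θ) * s) := by
  have hgm : a ^ θ * b ^ (1 - θ) ≤ a + b :=
    calc a ^ θ * b ^ (1 - θ) ≤ θ * a + (1 - θ) * b :=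
          geom_mean_le_arith_mean2_weighted hθ₀ (by linarith) ha.le hb.le (by ring)
      _ ≤ a + b := by nlinarith
  calc (a + b) ^ s ≤ (a ^ θ * b ^ (1 - θ)) ^ s := rpow_le_rpow_of_nonpos (by positivity) hgm hs
    _ = a ^ (θ * s) * b ^ ((1 - θ) * s) := by
      rw [mul_rpow (by positivity) (by positivity), ← rpow_mul ha.le, ← rpow_mul hb.le]

theorem locallyIntegrable_abs_rpow_add_abs_rpow_rpow {p q s : ℝ} (hp : 0 < p) (hq : 0 < q)
    (hs : -(p⁻¹ + q⁻¹) < s) :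
    LocallyIntegrable (fun u : ℝ × ℝ => (|u.1| ^ p + |u.2| ^ q) ^ s) := by
  have hcont : Continuous (fun u : ℝ × ℝ => |u.1| ^ p + |u.2| ^ q) :=
    ((continuous_abs.comp continuous_fst).rpow_const fun _ => Or.inr hp.le).add
      ((continuous_abs.comp continuous_snd).rpow_const fun _ => Or.inr hq.le)
  rcases le_or_gt 0 s with hs₀ | hs₀
  · exact (hcont.rpow_const fun _ => Or.inr hs₀).locallyIntegrable
  set Q := p⁻¹ + q⁻¹
  set c := -s / Q
  have hQ : 0 < Q := by positivity
  have hc : c < 1 := (div_lt_one hQ).2 (by linarith)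
  rw [Measure.volume_eq_prod]
  refine ((locallyIntegrable_abs_rpow (c := -c) (by linarith)).mul_prod
    (locallyIntegrable_abs_rpow (c := -c) (by linarith))).mono
    (hcont.measurable.pow_const s).aestronglyMeasurable ?_
  -- the bound fails on the axes, where `|0| ^ (-c) = 0`
  filter_upwards [Measure.quasiMeasurePreserving_fst.ae (volume.ae_ne 0),
    Measure.quasiMeasurePreserving_snd.ae (volume.ae_ne 0)] with u hx hy
  rw [norm_of_nonneg (by positivity), norm_of_nonneg (by positivity)]
  calc (|u.1| ^ p + |u.2| ^ q) ^ s
      ≤ (|u.1| ^ p) ^ (p⁻¹ / Q * s) * (|u.2| ^ q) ^ ((1 - p⁻¹ / Q) * s) :=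
        add_rpow_le_rpow_mul_rpow_of_nonpos (by positivity) (by positivity) (by positivity)
          ((div_le_one hQ).2 (by simp [Q, hq.le])) hs₀.le
    _ = |u.1| ^ (-c) * |u.2| ^ (-c) := by
      rw [← rpow_mul (abs_nonneg _), ← rpow_mul (abs_nonneg _)]
      congr 2
      · simp only [c, Q]; field_simp
      · simp only [c, Q]; field_simp; ring

lemma Complex.norm_ofReal_cpow_le {x : ℝ} (hx : 0 ≤ x) (w : ℂ) : ‖(x : ℂ) ^ w‖ ≤ x ^ w.re := by
  simpa [Complex.arg_ofReal_of_nonneg hx, abs_of_nonneg hx] using Complex.norm_cpow_le x w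

/-- For `1 ≤ m < n`, `Q = 1/(2n) + 1/(2m)`, and `Re z > 0`, the function
`u ↦ (u₂^(2n) + u₃^(2m))^(z-Q)` is locally integrable on `ℝ²`. -/
theorem stmt_3 (m n : ℕ) (hm : 1 ≤ m) (hmn : m < n) (Q : ℝ)
    (hQ : Q = 1 / (2 * n) + 1 / (2 * m)) (z : ℂ) (hz : 0 < z.re) :
    MeasureTheory.LocallyIntegrable
      (fun u : ℝ × ℝ => ((u.1 ^ (2 * n) + u.2 ^ (2 * m) : ℝ) : ℂ) ^ (z - (Q : ℂ)))
      MeasureTheory.volume := by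
  have hn : 1 ≤ n := hm.trans hmn.le
  have hρ := locallyIntegrable_abs_rpow_add_abs_rpow_rpow (p := (2 * n : ℕ)) (q := (2 * m : ℕ))
    (s := (z - Q).re) (by positivity) (by positivity) (by simp [hQ]; linarith)
  refine hρ.mono (Measurable.pow_const (by fun_prop) _).aestronglyMeasurable
    (ae_of_all _ fun u => ?_)
  have hρu : u.1 ^ (2 * n) + u.2 ^ (2 * m) =
      |u.1| ^ ((2 * n : ℕ) : ℝ) + |u.2| ^ ((2 * m : ℕ) : ℝ) := by
    rw [rpow_natCast, rpow_natCast, (even_two_mul n).pow_abs, (even_two_mul m).pow_abs]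
  rw [hρu, norm_of_nonneg (by positivity)]
  exact Complex.norm_ofReal_cpow_le (by positivity) _
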